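/- Let (V, e) be an absolute matrix order unit space satisfying (T) with eⁿ finite for all n. Then [(e, 0)] is a distinguished order unit for the ordered abelian group (K₀(V), K₀(V)⁺): for every g ∈ K₀(V) there exists n ∈ ℕ with −n[(e,0)] ≤ g ≤ n[(e,0)]. -/

import Mathlib

noncomputable section

open scoped Matrix.Norms.L2Operator

/-! ### The *-algebra 𝔉 of ∞×∞ complex matrices with finitely many nonzero entries -/

/-- `∞ × ∞` complex matrices (indexed by `ℕ × ℕ`). -/
abbrev FMat := ℕ → ℕ → ℂ

/-- The matrix has (at most) finitely many nonzero entries: it is supported in some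
`n × n` top-left block. -/
def IsFin (a : FMat) : Prop := ∃ n, ∀ i j, (n ≤ i ∨ n ≤ j) → a i j = 0

/-- Matrix multiplication in `𝔉` (the `tsum` is a finite sum for finitely supported
matrices). -/
def fmul (a b : FMat) : FMat := fun i k => ∑' j, a i j * b j k

/-- The involution (conjugate transpose) on `𝔉`. -/
def fstar (a : FMat) : FMat := fun i j => starRingEnd ℂ (a j i)

/-- The matrix unit `𝔢_{i,j}`. -/
def eUnit (i j : ℕ) : FMat := fun k l => if k = i ∧ l = j then 1 else 0

/-- `𝔍ₙ = Σ_{i<n} 𝔢_{i,i}`, the partial identities. -/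
def JMat (n : ℕ) : FMat := fun k l => if k = l ∧ k < n then 1 else 0

/-- `𝔎ₙ = Σ_{i<n} 𝔢_{i,n+i}`, used for `2×2`-block constructions. -/
def KMat (n : ℕ) : FMat := fun k l => if l = k + n ∧ k < n then 1 else 0

/-- The diagonal idempotent `Σ_{i ∈ s} 𝔢_{i,i}` associated to a finite set `s ⊂ ℕ`. -/
def finsetDiag (s : Finset ℕ) : FMat := fun k l => if k = l ∧ k ∈ s then 1 else 0

/-- The operator norm on `𝔉`: the supremum of the (C*-algebra) operator norms of the
finite top-left blocks (for a finitely supported matrix the blocks stabilize). -/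
def fnorm (a : FMat) : ℝ :=
  ⨆ n : ℕ, ‖(Matrix.of fun i j : Fin n => a i j : Matrix (Fin n) (Fin n) ℂ)‖

/-- The order `o(𝔞)` of a finitely supported matrix: the least `n` such that `𝔞` is
supported in the top-left `n × n` block. -/
def matOrd (a : FMat) : ℕ := sInf {n | ∀ i j, (n ≤ i ∨ n ≤ j) → a i j = 0}

/-- A local unitary in `𝔉`: `𝔞*𝔞 = 𝔍_{o(𝔞)} = 𝔞𝔞*`. -/
def IsLocalUnitary (a : FMat) : Prop :=
  IsFin a ∧ fmul (fstar a) a = JMat (matOrd a) ∧ fmul a (fstar a) = JMat (matOrd a)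

/-! ### Non-degenerate *-𝔉-bimodules -/

/-- A non-degenerate `*`-`𝔉`-bimodule structure on a complex vector space `V`:
left and right actions of (finitely supported) infinite matrices together with an
involution, compatible with each other and with the complex scalars, such that every
element is `𝔍ₙ·v·𝔍ₙ` for some `n`. -/
structure FBimod (V : Type*) [AddCommGroup V] [Module ℂ V] where
  lsmul : FMat → V → V
  rsmul : V → FMat → V
  star : V → V
  lsmul_add : ∀ a u v, lsmul a (u + v) = lsmul a u + lsmul a v
  rsmul_add : ∀ u v b, rsmul (u + v) b = rsmul u b + rsmul v b
  add_lsmul : ∀ a b v, IsFin a → IsFin b → lsmul (a + b) v = lsmul a v + lsmul b v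
  rsmul_add' : ∀ v a b, IsFin a → IsFin b → rsmul v (a + b) = rsmul v a + rsmul v b
  smul_lsmul : ∀ (c : ℂ) a v, IsFin a → lsmul (c • a) v = c • lsmul a v
  smul_rsmul : ∀ (c : ℂ) v a, IsFin a → rsmul v (c • a) = c • rsmul v a
  mul_lsmul : ∀ a b v, IsFin a → IsFin b → lsmul (fmul a b) v = lsmul a (lsmul b v)
  rsmul_mul : ∀ v a b, IsFin a → IsFin b → rsmul v (fmul a b) = rsmul (rsmul v a) b
  lsmul_rsmul : ∀ a v b, IsFin a → IsFin b → rsmul (lsmul a v) b = lsmul a (rsmul v b)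
  star_add : ∀ u v, star (u + v) = star u + star v
  star_star : ∀ v, star (star v) = v
  star_lsmul : ∀ a v, IsFin a → star (lsmul a v) = rsmul (star v) (fstar a)
  star_rsmul : ∀ v a, IsFin a → star (rsmul v a) = lsmul (fstar a) (star v)
  smul_compat : ∀ (c : ℂ) (n : ℕ) v, lsmul (JMat n) (rsmul v (JMat n)) = v →
    lsmul (c • JMat n) v = c • v
  nondeg : ∀ v, ∃ n, lsmul (JMat n) (rsmul v (JMat n)) = v

namespace FBimod

variable {V : Type*} [AddCommGroup V] [Module ℂ V] (M : FBimod V)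

/-- `𝔍ₙ 𝔳 𝔍ₙ`. -/
def cut (n : ℕ) (v : V) : V := M.lsmul (JMat n) (M.rsmul v (JMat n))

/-- The order `o(𝔳)`: the smallest `n` with `𝔍ₙ 𝔳 𝔍ₙ = 𝔳`. -/
def ord (v : V) : ℕ := sInf {n | M.cut n v = v}

/-- `𝔞* 𝔳 𝔞`. -/
def conj (a : FMat) (v : V) : V := M.lsmul (fstar a) (M.rsmul v a)

/-- `C` is a bimodule cone: consists of self-adjoint elements, is closed under
addition and under `𝔳 ↦ 𝔞*𝔳𝔞` for `𝔞 ∈ 𝔉`. -/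
def IsCone (C : Set V) : Prop :=
  (∀ v ∈ C, M.star v = v) ∧ (∀ u ∈ C, ∀ v ∈ C, u + v ∈ C) ∧
    (∀ v ∈ C, ∀ a : FMat, IsFin a → M.conj a v ∈ C)

/-- The cone `C` is proper: `C ∩ (−C) = {0}`. -/
def ConeProper (C : Set V) : Prop := ∀ v ∈ C, -v ∈ C → v = 0

/-- The cone `C` is Archimedean. -/
def ConeArch (C : Set V) : Prop :=
  ∀ u ∈ C, ∀ v : V, M.star v = v → (∀ k : ℝ, 0 < k → (k : ℂ) • u + v ∈ C) → v ∈ C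

/-- The cone `C` is generating. -/
def ConeGen (C : Set V) : Prop :=
  ∀ v : V, ∃ v₀ ∈ C, ∃ v₁ ∈ C, ∃ v₂ ∈ C, ∃ v₃ ∈ C,
    v = v₀ + Complex.I • v₁ - v₂ - Complex.I • v₃

/-- `(𝔳₁, 𝔳₂)ₙ⁺ = 𝔳₁ + 𝔎ₙ* 𝔳₂ 𝔎ₙ` (the diagonal `2×2`-block `diag(𝔳₁,𝔳₂)`). -/
def pairPlus (n : ℕ) (v₁ v₂ : V) : V :=
  v₁ + M.lsmul (fstar (KMat n)) (M.rsmul v₂ (KMat n))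

/-- `saₙ(𝔳) = 𝔍ₙ 𝔳 𝔎ₙ + 𝔎ₙ* 𝔳* 𝔍ₙ` (the off-diagonal `2×2`-block of `𝔳`). -/
def san (n : ℕ) (v : V) : V :=
  M.lsmul (JMat n) (M.rsmul v (KMat n)) +
    M.lsmul (fstar (KMat n)) (M.rsmul (M.star v) (JMat n))

/-- `𝔲` and `𝔳` are `𝔉`-independent: compressed onto disjoint diagonal blocks. -/
def FIndep (u v : V) : Prop :=
  ∃ I J : Finset ℕ, Disjoint I J ∧
    M.lsmul (finsetDiag I) (M.rsmul u (finsetDiag I)) = u ∧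
    M.lsmul (finsetDiag J) (M.rsmul v (finsetDiag J)) = v

/-- `(𝔙, C, abs)` is a non-degenerate absolutely ordered `𝔉`-bimodule
(Definition 18 of the paper). -/
structure IsAbsOrd (C : Set V) (abs : V → V) : Prop where
  cone : M.IsCone C
  abs_mem : ∀ v, abs v ∈ C
  ord_abs_le : ∀ v, M.ord (abs v) ≤ M.ord v
  abs_of_mem : ∀ v ∈ C, abs v = v
  pos_part : ∀ v, M.pairPlus (M.ord v) (abs (M.star v)) (abs v) + M.san (M.ord v) v ∈ C
  abs_smul_le : ∀ (a b : FMat), IsFin a → IsFin b → ∀ v,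
    (fnorm a : ℂ) • abs (M.rsmul (abs v) b) - abs (M.lsmul a (M.rsmul v b)) ∈ C
  indep_add : ∀ u v, M.FIndep u v → abs (u + v) = abs u + abs v
  absorb : ∀ u ∈ C, ∀ v ∈ C, ∀ w ∈ C, abs (u - v) = u + v → v - w ∈ C →
    abs (u - w) = u + w
  ortho_pm : ∀ u ∈ C, ∀ v ∈ C, ∀ w ∈ C, abs (u - v) = u + v → abs (u - w) = u + w →
    abs (u - abs (v + w)) = u + abs (v + w) ∧ abs (u - abs (v - w)) = u + abs (v - w)

/-- `eⁿ = Σ_{i<n} 𝔢_{i,0} 𝔢 𝔢_{0,i}` for an element `𝔢` of order `1`. -/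
def epow (e : V) (n : ℕ) : V :=
  ∑ i ∈ Finset.range n, M.lsmul (eUnit i 0) (M.rsmul e (eUnit 0 i))

/-- `𝔢` is a local order unit for `(𝔙, C)`. -/
def IsLocalOrderUnit (C : Set V) (e : V) : Prop :=
  e ∈ C ∧ M.cut 1 e = e ∧ ∀ v : V, M.cut 1 v = v → ∃ k : ℝ, 0 < k ∧
    M.pairPlus 1 ((k : ℂ) • e) ((k : ℂ) • e) + M.san 1 v ∈ C

/-- `(𝔙, C, 𝔢)` is a local `𝔉`-order unit bimodule. -/
def IsLocalUnitBimod (C : Set V) (e : V) : Prop :=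
  M.IsCone C ∧ ConeProper C ∧ M.ConeArch C ∧ M.IsLocalOrderUnit C e

/-- The norm associated to a local order unit:
`‖𝔳‖ = inf { k > 0 : (k𝔢^{o(𝔳)}, k𝔢^{o(𝔳)})⁺_{o(𝔳)} + sa_{o(𝔳)}(𝔳) ∈ C }`. -/
def lnorm (C : Set V) (e : V) (v : V) : ℝ :=
  sInf {k : ℝ | 0 < k ∧
    M.pairPlus (M.ord v) ((k : ℂ) • M.epow e (M.ord v)) ((k : ℂ) • M.epow e (M.ord v)) +
      M.san (M.ord v) v ∈ C}

/-- `𝔲 ⊥_∞ 𝔳` with respect to the local-order-unit norm. -/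
def PerpInf (C : Set V) (e : V) (u v : V) : Prop :=
  ∀ k₁ k₂ : ℝ, M.lnorm C e ((k₁ : ℂ) • u + (k₂ : ℂ) • v) =
    max (M.lnorm C e ((k₁ : ℂ) • u)) (M.lnorm C e ((k₂ : ℂ) • v))

end FBimod
/-! ### Matrices over a complex *-vector space -/

section MatrixLevel

variable {V : Type*} [AddCommGroup V] [Module ℂ V] [StarAddMonoid V] [StarModule ℂ V]

/-- Conjugate transpose of a rectangular matrix over a `*`-vector space. -/
def mstar {m n : ℕ} (v : Matrix (Fin m) (Fin n) V) : Matrix (Fin n) (Fin m) V :=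
  fun i j => star (v j i)

/-- Left action of a scalar matrix: `(a v)_{ij} = Σ_k a_{ik} v_{kj}`. -/
def aSmul {r m n : ℕ} (a : Matrix (Fin r) (Fin m) ℂ) (v : Matrix (Fin m) (Fin n) V) :
    Matrix (Fin r) (Fin n) V :=
  fun i j => ∑ k, a i k • v k j

/-- Right action of a scalar matrix: `(v b)_{ij} = Σ_k b_{kj} • v_{ik}`. -/
def smulB {m n s : ℕ} (v : Matrix (Fin m) (Fin n) V) (b : Matrix (Fin n) (Fin s) ℂ) :
    Matrix (Fin m) (Fin s) V :=
  fun i j => ∑ k, b k j • v i k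

/-- Direct sum (block diagonal) of rectangular matrices over `V`. -/
def dsum {m n r s : ℕ} (v : Matrix (Fin m) (Fin n) V) (w : Matrix (Fin r) (Fin s) V) :
    Matrix (Fin (m + r)) (Fin (n + s)) V :=
  fun i j =>
    if hi : (i : ℕ) < m then
      (if hj : (j : ℕ) < n then v ⟨i, hi⟩ ⟨j, hj⟩ else 0)
    else
      (if hj : (j : ℕ) < n then 0
       else w ⟨(i : ℕ) - m, by have := i.isLt; omega⟩ ⟨(j : ℕ) - n, by have := j.isLt; omega⟩)

end MatrixLevel

/-- The L2-operator norm of a rectangular complex scalar matrix. -/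
def cnorm {r m : ℕ} (a : Matrix (Fin r) (Fin m) ℂ) : ℝ := ‖a‖

/-- Embedding of a finite rectangular complex matrix into `𝔉`. -/
def embC {r m : ℕ} (a : Matrix (Fin r) (Fin m) ℂ) : FMat :=
  fun i j => if hi : i < r then (if hj : j < m then a ⟨i, hi⟩ ⟨j, hj⟩ else 0) else 0

/-- `e ⊕ ⋯ ⊕ e`: the diagonal matrix with constant diagonal `e`. -/
def diagE {V : Type*} [AddCommGroup V] (e : V) (n : ℕ) : Matrix (Fin n) (Fin n) V :=
  Matrix.of fun i j => if i = j then e else 0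

/-! ### Absolutely matrix ordered spaces and absolute matrix order unit spaces -/

/-- An absolutely matrix ordered space structure on a complex `*`-vector space `V`:
matrix cones `Mₙ(V)⁺` and absolute values `|·|_{m,n} : M_{m,n}(V) → Mₙ(V)⁺`
(Definition 4.1 of Karn-Kumar). -/
structure AMOS (V : Type*) [AddCommGroup V] [Module ℂ V] [StarAddMonoid V]
    [StarModule ℂ V] where
  pos : ∀ n : ℕ, Set (Matrix (Fin n) (Fin n) V)
  abs : ∀ m n : ℕ, Matrix (Fin m) (Fin n) V → Matrix (Fin n) (Fin n) V
  pos_star : ∀ n, ∀ v ∈ pos n, mstar v = v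
  pos_add : ∀ n, ∀ u ∈ pos n, ∀ v ∈ pos n, u + v ∈ pos n
  pos_conj : ∀ m n (a : Matrix (Fin n) (Fin m) ℂ), ∀ v ∈ pos n,
    aSmul a.conjTranspose (smulB v a) ∈ pos m
  abs_mem : ∀ m n v, abs m n v ∈ pos n
  abs_of_pos : ∀ n, ∀ v ∈ pos n, abs n n v = v
  abs_add_self : ∀ n (v : Matrix (Fin n) (Fin n) V), mstar v = v →
    abs n n v + v ∈ pos n ∧ abs n n v - v ∈ pos n
  abs_real_smul : ∀ n (k : ℝ) (v : Matrix (Fin n) (Fin n) V), mstar v = v →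
    abs n n ((k : ℂ) • v) = ((|k| : ℝ) : ℂ) • abs n n v
  absorb : ∀ n, ∀ u ∈ pos n, ∀ v ∈ pos n, ∀ w ∈ pos n,
    abs n n (u - v) = u + v → v - w ∈ pos n → abs n n (u - w) = u + w
  ortho_pm : ∀ n, ∀ u ∈ pos n, ∀ v ∈ pos n, ∀ w ∈ pos n,
    abs n n (u - v) = u + v → abs n n (u - w) = u + w →
    abs n n (u - abs n n (v + w)) = u + abs n n (v + w) ∧
      abs n n (u - abs n n (v - w)) = u + abs n n (v - w)
  abs_smul_le : ∀ (r m n s : ℕ) (α : Matrix (Fin r) (Fin m) ℂ)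
    (v : Matrix (Fin m) (Fin n) V) (β : Matrix (Fin n) (Fin s) ℂ),
    (cnorm α : ℂ) • abs n s (smulB (abs m n v) β) - abs r s (aSmul α (smulB v β)) ∈ pos s
  abs_dsum : ∀ (m n r s : ℕ) (v : Matrix (Fin m) (Fin n) V) (w : Matrix (Fin r) (Fin s) V),
    abs (m + r) (n + s) (dsum v w) = dsum (abs m n v) (abs r s w)

/-- A matrix order unit structure on top of an absolutely matrix ordered space:
an order unit `e` with `V⁺` proper and each `Mₙ(V)⁺` Archimedean. -/
structure AMOUS (V : Type*) [AddCommGroup V] [Module ℂ V] [StarAddMonoid V]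
    [StarModule ℂ V] extends AMOS V where
  e : V
  e_pos : diagE e 1 ∈ pos 1
  proper : ∀ v ∈ pos 1, -v ∈ pos 1 → v = 0
  arch : ∀ n (v : Matrix (Fin n) (Fin n) V), mstar v = v →
    (∀ k : ℝ, 0 < k → (k : ℂ) • diagE e n + v ∈ pos n) →
    v ∈ pos n
  unit : ∀ n (v : Matrix (Fin n) (Fin n) V), mstar v = v →
    ∃ k : ℝ, 0 < k ∧ (k : ℂ) • diagE e n - v ∈ pos n ∧
      (k : ℂ) • diagE e n + v ∈ pos n

namespace AMOUS

variable {V : Type*} [AddCommGroup V] [Module ℂ V] [StarAddMonoid V] [StarModule ℂ V]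
variable (A : AMOUS V)

/-- `eⁿ = e ⊕ ⋯ ⊕ e ∈ Mₙ(V)`. -/
def eN (n : ℕ) : Matrix (Fin n) (Fin n) V := diagE A.e n

/-- The `2n × 2n` matrix `[[a, b], [c, d]]` of `n × n` blocks. -/
def block2 {n : ℕ} (a b c d : Matrix (Fin n) (Fin n) V) :
    Matrix (Fin (n + n)) (Fin (n + n)) V :=
  fun i j =>
    if hi : (i : ℕ) < n then
      (if hj : (j : ℕ) < n then a ⟨i, hi⟩ ⟨j, hj⟩
       else b ⟨i, hi⟩ ⟨(j : ℕ) - n, by have := j.isLt; omega⟩)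
    else
      (if hj : (j : ℕ) < n then c ⟨(i : ℕ) - n, by have := i.isLt; omega⟩ ⟨j, hj⟩
       else d ⟨(i : ℕ) - n, by have := i.isLt; omega⟩ ⟨(j : ℕ) - n, by have := j.isLt; omega⟩)

end AMOUS
namespace AMOUS

variable {V : Type*} [AddCommGroup V] [Module ℂ V] [StarAddMonoid V] [StarModule ℂ V]
variable (A : AMOUS V)

/-- The matrix norms of a matrix order unit space:
`‖v‖ₙ = inf { k > 0 : [[k eⁿ, v], [v*, k eⁿ]] ∈ M₂ₙ(V)⁺ }`. -/
def mnorm (n : ℕ) (v : Matrix (Fin n) (Fin n) V) : ℝ :=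
  sInf {k : ℝ | 0 < k ∧
    block2 ((k : ℂ) • A.eN n) v (mstar v) ((k : ℂ) • A.eN n) ∈ A.pos (n + n)}

/-- Orthogonality `u ⊥ v` (for positive elements): `|u − v| = u + v`. -/
def Perp {n : ℕ} (u v : Matrix (Fin n) (Fin n) V) : Prop :=
  A.abs n n (u - v) = u + v

/-- `u ⊥_∞ v`: `‖k₁ u + k₂ v‖ = max {‖k₁ u‖, ‖k₂ v‖}` for all real `k₁, k₂`. -/
def PerpInfM {n : ℕ} (u v : Matrix (Fin n) (Fin n) V) : Prop :=
  ∀ k₁ k₂ : ℝ, A.mnorm n ((k₁ : ℂ) • u + (k₂ : ℂ) • v) =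
    max (A.mnorm n ((k₁ : ℂ) • u)) (A.mnorm n ((k₂ : ℂ) • v))

/-- `u ⊥_∞^a v`: absolute `∞`-orthogonality. -/
def PerpInfA {n : ℕ} (u v : Matrix (Fin n) (Fin n) V) : Prop :=
  ∀ u₁ ∈ A.pos n, ∀ v₁ ∈ A.pos n, u - u₁ ∈ A.pos n → v - v₁ ∈ A.pos n → A.PerpInfM u₁ v₁

/-- `(V, {Mₙ(V)⁺}, {|·|}, e)` is an absolute matrix order unit space:
`⊥ = ⊥_∞^a` on each `Mₙ(V)⁺`. -/
def IsAbsolute : Prop :=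
  ∀ n, ∀ u ∈ A.pos n, ∀ v ∈ A.pos n, (A.Perp u v ↔ A.PerpInfA u v)

/-- `p` is an order projection in `Mₙ(V)`: `p* = p` and `|2p − eⁿ| = eⁿ`. -/
def IsOP (n : ℕ) (p : Matrix (Fin n) (Fin n) V) : Prop :=
  mstar p = p ∧ A.abs n n ((2 : ℂ) • p - A.eN n) = A.eN n

/-- `v ∈ M_{m,n}(V)` is a partial isometry: `|v|` and `|v*|` are order projections. -/
def IsPI {m n : ℕ} (v : Matrix (Fin m) (Fin n) V) : Prop :=
  A.IsOP n (A.abs m n v) ∧ A.IsOP m (A.abs n m (mstar v))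

end AMOUS

/-- An element of `M_∞(V)`: a matrix at some level `n`. -/
def OPE (V : Type*) : Type _ := Σ n : ℕ, Matrix (Fin n) (Fin n) V

namespace OPE

variable {V : Type*} [AddCommGroup V] [Module ℂ V] [StarAddMonoid V] [StarModule ℂ V]

/-- Direct sum in `M_∞(V)`. -/
def d (p q : OPE V) : OPE V := ⟨p.1 + q.1, dsum p.2 q.2⟩

/-- The zero order projection (at level 1). -/
def zero (V : Type*) [AddCommGroup V] : OPE V := ⟨1, 0⟩

end OPE

namespace AMOUS

variable {V : Type*} [AddCommGroup V] [Module ℂ V] [StarAddMonoid V] [StarModule ℂ V]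
variable (A : AMOUS V)

/-- Membership in `𝒪𝒫_∞(V)`. -/
def IsOPE (p : OPE V) : Prop := A.IsOP p.1 p.2

/-- `eⁿ` as an element of `𝒪𝒫_∞(V)`. -/
def eOPE (n : ℕ) : OPE V := ⟨n, A.eN n⟩

/-- Partial isometric equivalence `p ∼ q` of order projections: there is a partial
isometry `v` with `p = |v*|` and `q = |v|`. -/
def Sim (p q : OPE V) : Prop :=
  ∃ v : Matrix (Fin p.1) (Fin q.1) V,
    A.IsPI v ∧ p.2 = A.abs q.1 p.1 (mstar v) ∧ q.2 = A.abs p.1 q.1 v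

/-- Condition (T). -/
def CondT : Prop :=
  ∀ (m n l : ℕ) (u : Matrix (Fin m) (Fin n) V) (v : Matrix (Fin l) (Fin n) V),
    A.IsPI u → A.IsPI v → A.abs m n u = A.abs l n v →
    ∃ w : Matrix (Fin m) (Fin l) V, A.IsPI w ∧
      A.abs l m (mstar w) = A.abs n m (mstar u) ∧ A.abs m l w = A.abs n l (mstar v)

/-- Stabilized equivalence `p ≈ q`: `p ⊕ r ∼ q ⊕ r` for some order projection `r`. -/
def ASim (p q : OPE V) : Prop := ∃ r : OPE V, A.IsOPE r ∧ A.Sim (p.d r) (q.d r)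

/-- A pair of order projections, representing an element `[(p,q)]` of `K₀(V)`. -/
def IsOPPair (x : OPE V × OPE V) : Prop := A.IsOPE x.1 ∧ A.IsOPE x.2

/-- The relation `(p₁,q₁) ≡ (p₂,q₂) ↔ p₁ ⊕ q₂ ≈ p₂ ⊕ q₁` defining `K₀(V)`. -/
def Krel (x y : OPE V × OPE V) : Prop := A.ASim (x.1.d y.2) (y.1.d x.2)

/-- Addition of representatives of `K₀(V)` classes. -/
def kadd (x y : OPE V × OPE V) : OPE V × OPE V := (x.1.d y.1, x.2.d y.2)

/-- The representative of the zero class of `K₀(V)`. -/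
def kzero : OPE V × OPE V := (OPE.zero V, OPE.zero V)

/-- Representative-level membership in the cone `K₀(V)⁺ = {[(p,0)] : p ∈ 𝒪𝒫_∞(V)}`. -/
def KPos (x : OPE V × OPE V) : Prop :=
  ∃ p : OPE V, A.IsOPE p ∧ A.Krel x (p, OPE.zero V)

/-- Representative-level order `[x] ≤ [y]` in `K₀(V)`: `[y] − [x] ∈ K₀(V)⁺`. -/
def Kle (x y : OPE V × OPE V) : Prop :=
  ∃ r : OPE V, A.IsOPE r ∧ A.Krel (kadd x (r, OPE.zero V)) y

/-- The order projection `p ∈ Mₙ(V)` is finite: `q ∼ p` and `q ≥ p` imply `q = p`. -/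
def FiniteOP (n : ℕ) (p : Matrix (Fin n) (Fin n) V) : Prop :=
  ∀ q : Matrix (Fin n) (Fin n) V, A.IsOP n q → A.Sim ⟨n, q⟩ ⟨n, p⟩ →
    q - p ∈ A.pos n → q = p

end AMOUS

/-! ### Maps between absolute matrix order unit spaces -/

section Maps

variable {V W : Type*} [AddCommGroup V] [Module ℂ V] [StarAddMonoid V] [StarModule ℂ V]
  [AddCommGroup W] [Module ℂ W] [StarAddMonoid W] [StarModule ℂ W]

/-- The amplification `φₙ` (entrywise application) of a map. -/
def mmap (φ : V →ₗ[ℂ] W) {m n : ℕ} (v : Matrix (Fin m) (Fin n) V) :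
    Matrix (Fin m) (Fin n) W :=
  fun i j => φ (v i j)

/-- `φ` is completely `|·|`-preserving: every amplification `φₙ` is `|·|`-preserving. -/
def CAbsPres (A : AMOUS V) (B : AMOUS W) (φ : V →ₗ[ℂ] W) : Prop :=
  ∀ (n : ℕ) (v : Matrix (Fin n) (Fin n) V), B.abs n n (mmap φ v) = mmap φ (A.abs n n v)

/-- `φ` and `ψ` are completely orthogonal: `φₙ(u) ⊥ ψₙ(v)` for all positive `u, v`. -/
def COrth (A : AMOUS V) (B : AMOUS W) (φ ψ : V →ₗ[ℂ] W) : Prop :=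
  ∀ (n : ℕ) (u v : Matrix (Fin n) (Fin n) V), u ∈ A.pos n → v ∈ A.pos n →
    B.Perp (mmap φ u) (mmap ψ v)

/-- The image of an element of `M_∞(V)` under (the amplifications of) `φ`. -/
def mmapOPE (φ : V →ₗ[ℂ] W) (p : OPE V) : OPE W := ⟨p.1, mmap φ p.2⟩

/-- `F` represents a group homomorphism `K₀(V) → K₀(W)` making the `K₀` diagram of `φ`
commute: it maps `K₀`-representatives to `K₀`-representatives, respects the defining
relation `≡`, is additive, and satisfies `F([(p, 0)]) = [(φ(p), 0)]`. -/
def K0HomProp (A : AMOUS V) (B : AMOUS W) (φ : V →ₗ[ℂ] W)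
    (F : OPE V × OPE V → OPE W × OPE W) : Prop :=
  (∀ x, A.IsOPPair x → B.IsOPPair (F x)) ∧
  (∀ x y, A.IsOPPair x → A.IsOPPair y → A.Krel x y → B.Krel (F x) (F y)) ∧
  (∀ x y, A.IsOPPair x → A.IsOPPair y → B.Krel (F (AMOUS.kadd x y)) (AMOUS.kadd (F x) (F y))) ∧
  (∀ p : OPE V, A.IsOPE p → B.Krel (F (p, OPE.zero V)) (mmapOPE φ p, OPE.zero W))

/-- The completely bounded norm of `φ` with respect to the order unit matrix norms. -/
def cbNorm (A : AMOUS V) (B : AMOUS W) (φ : V →ₗ[ℂ] W) : ℝ :=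
  ⨆ n : ℕ, sInf {c : ℝ | 0 ≤ c ∧
    ∀ v : Matrix (Fin n) (Fin n) V, B.mnorm n (mmap φ v) ≤ c * A.mnorm n v}

end Maps

/-!
Write a class of `K₀(V)` as `[p] − [q]` with order projections `p ∈ Mₘ(V)`, `q ∈ Mₗ(V)`. Both
bounds `−(m+l)[e] ≤ [p] − [q] ≤ (m+l)[e]` reduce to the single equivalence `p ⊕ (eᵐ − p) ∼ eᵐ`,
once `∼` is known to be transitive (this is condition (T)) and compatible with direct sums,
reordering of summands and padding by zero blocks.

The equivalence is implemented by the column `v = [p; eᵐ − p]`. Absolute values add on matrices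
whose absolute values, and those of their adjoints, are orthogonal: for self-adjoint matrices this
follows from the decomposition into positive and negative parts, and in general from the
self-adjoint dilation `[[0, v], [v*, 0]]`. Hence `|v| = eᵐ` and `|v*| = p ⊕ (eᵐ − p)`. Invariance of
`|·|` under permutations, needed for the reorderings, comes from the axiom
`‖α‖ |(|v| β)| ≥ |α v β|` applied to unitary permutation matrices.
-/

open Matrix

theorem mstar_eq_conjTranspose {V : Type*} [AddCommGroup V] [StarAddMonoid V] {m n : ℕ}
    (v : Matrix (Fin m) (Fin n) V) : mstar v = vᴴ := rfl

section ScalarAction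

variable {V : Type*} [AddCommGroup V] [Module ℂ V]

theorem aSmul_one {m n : ℕ} (v : Matrix (Fin m) (Fin n) V) : aSmul 1 v = v := by
  ext i j
  simp [aSmul, one_apply, ite_smul]

theorem smulB_one {m n : ℕ} (v : Matrix (Fin m) (Fin n) V) : smulB v 1 = v := by
  ext i j
  simp [smulB, one_apply, ite_smul]

theorem aSmul_aSmul {r m n s : ℕ} (a : Matrix (Fin r) (Fin m) ℂ) (b : Matrix (Fin m) (Fin s) ℂ)
    (v : Matrix (Fin s) (Fin n) V) : aSmul a (aSmul b v) = aSmul (a * b) v := by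
  ext i j
  simp only [aSmul, mul_apply, Finset.smul_sum, Finset.sum_smul, smul_smul]
  exact Finset.sum_comm

theorem smulB_smulB {m n s t : ℕ} (v : Matrix (Fin m) (Fin n) V) (a : Matrix (Fin n) (Fin s) ℂ)
    (b : Matrix (Fin s) (Fin t) ℂ) : smulB (smulB v a) b = smulB v (a * b) := by
  ext i j
  simp only [smulB, mul_apply, Finset.smul_sum, Finset.sum_smul, smul_smul, mul_comm (b _ _)]
  exact Finset.sum_comm

theorem aSmul_smulB {r m n s : ℕ} (a : Matrix (Fin r) (Fin m) ℂ) (v : Matrix (Fin m) (Fin n) V)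
    (b : Matrix (Fin n) (Fin s) ℂ) : aSmul a (smulB v b) = smulB (aSmul a v) b := by
  ext i j
  simp only [aSmul, smulB, Finset.smul_sum, smul_comm (a _ _)]
  exact Finset.sum_comm

theorem aSmul_sub {r m n : ℕ} (a : Matrix (Fin r) (Fin m) ℂ) (u v : Matrix (Fin m) (Fin n) V) :
    aSmul a (u - v) = aSmul a u - aSmul a v := by
  ext i j
  simp [aSmul, smul_sub, Finset.sum_sub_distrib]

theorem smulB_sub {m n s : ℕ} (u v : Matrix (Fin m) (Fin n) V) (b : Matrix (Fin n) (Fin s) ℂ) :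
    smulB (u - v) b = smulB u b - smulB v b := by
  ext i j
  simp [smulB, smul_sub, Finset.sum_sub_distrib]

theorem aSmul_smul {r m n : ℕ} (a : Matrix (Fin r) (Fin m) ℂ) (c : ℂ)
    (v : Matrix (Fin m) (Fin n) V) : aSmul a (c • v) = c • aSmul a v := by
  ext i j
  simp [aSmul, Finset.smul_sum, smul_comm c]

theorem smulB_smul {m n s : ℕ} (c : ℂ) (v : Matrix (Fin m) (Fin n) V)
    (b : Matrix (Fin n) (Fin s) ℂ) : smulB (c • v) b = c • smulB v b := by
  ext i j
  simp [smulB, Finset.smul_sum, smul_comm c]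

theorem smul_aSmul {r m n : ℕ} (c : ℂ) (a : Matrix (Fin r) (Fin m) ℂ)
    (v : Matrix (Fin m) (Fin n) V) : aSmul (c • a) v = c • aSmul a v := by
  ext i j
  simp [aSmul, Finset.smul_sum, smul_smul]

theorem smulB_smul_right {m n s : ℕ} (v : Matrix (Fin m) (Fin n) V) (c : ℂ)
    (b : Matrix (Fin n) (Fin s) ℂ) : smulB v (c • b) = c • smulB v b := by
  ext i j
  simp [smulB, Finset.smul_sum, smul_smul]

theorem zero_aSmul {r m n : ℕ} (v : Matrix (Fin m) (Fin n) V) :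
    aSmul (0 : Matrix (Fin r) (Fin m) ℂ) v = 0 := by
  ext i j
  simp [aSmul]

theorem aSmul_one_submatrix {r m n : ℕ} (σ : Fin r → Fin m) (v : Matrix (Fin m) (Fin n) V) :
    aSmul ((1 : Matrix (Fin m) (Fin m) ℂ).submatrix σ id) v = v.submatrix σ id := by
  ext i j
  simp [aSmul, one_apply, ite_smul]

theorem smulB_one_submatrix {m n s : ℕ} (v : Matrix (Fin m) (Fin n) V) (τ : Fin s → Fin n) :
    smulB v ((1 : Matrix (Fin n) (Fin n) ℂ).submatrix id τ) = v.submatrix id τ := by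
  ext i j
  simp [smulB, one_apply, ite_smul]

theorem reindex_eq_aSmul_smulB {a b a' b' : ℕ} (σ : Fin a ≃ Fin a') (τ : Fin b ≃ Fin b')
    (v : Matrix (Fin a) (Fin b) V) :
    reindex σ τ v = aSmul ((1 : Matrix (Fin a) (Fin a) ℂ).submatrix σ.symm id)
      (smulB v ((1 : Matrix (Fin b) (Fin b) ℂ).submatrix τ.symm id)ᴴ) := by
  rw [conjTranspose_submatrix, conjTranspose_one, smulB_one_submatrix, aSmul_one_submatrix]
  rfl

end ScalarAction

section Isometry

variable {a b : ℕ}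

theorem submatrix_one_isometry (σ : Fin a ≃ Fin b) :
    ((1 : Matrix (Fin b) (Fin b) ℂ).submatrix σ id)ᴴ *
      (1 : Matrix (Fin b) (Fin b) ℂ).submatrix σ id = 1 := by
  rw [conjTranspose_submatrix, conjTranspose_one, submatrix_mul_equiv, mul_one, submatrix_id_id]

theorem submatrix_one_coisometry (σ : Fin a ≃ Fin b) :
    (1 : Matrix (Fin b) (Fin b) ℂ).submatrix σ id *
      ((1 : Matrix (Fin b) (Fin b) ℂ).submatrix σ id)ᴴ = 1 := by
  rw [conjTranspose_submatrix, conjTranspose_one, ← Equiv.coe_refl, submatrix_mul_equiv, mul_one,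
    submatrix_one_equiv]

theorem cnorm_le_one_of_isometry {α : Matrix (Fin a) (Fin b) ℂ} (h : αᴴ * α = 1) :
    cnorm α ≤ 1 := by
  have hα : ‖α‖ * ‖α‖ = ‖(1 : Matrix (Fin b) (Fin b) ℂ)‖ := by
    rw [← l2_opNorm_conjTranspose_mul_self, h]
  have h1 : ‖(1 : Matrix (Fin b) (Fin b) ℂ)‖ ≤ 1 := by
    have := l2_opNorm_conjTranspose_mul_self (1 : Matrix (Fin b) (Fin b) ℂ)
    rw [conjTranspose_one, mul_one] at this
    nlinarith [norm_nonneg (1 : Matrix (Fin b) (Fin b) ℂ)]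
  unfold cnorm
  nlinarith [norm_nonneg α]

end Isometry

section DirectSum

variable {V : Type*} [AddCommGroup V]

section
variable {m n r s : ℕ} (v : Matrix (Fin m) (Fin n) V) (w : Matrix (Fin r) (Fin s) V)

@[simp] theorem dsum_castAdd_castAdd (i : Fin m) (j : Fin n) :
    dsum v w (Fin.castAdd r i) (Fin.castAdd s j) = v i j := by simp [dsum]

@[simp] theorem dsum_castAdd_natAdd (i : Fin m) (j : Fin s) :
    dsum v w (Fin.castAdd r i) (Fin.natAdd n j) = 0 := by simp [dsum]

@[simp] theorem dsum_natAdd_castAdd (i : Fin r) (j : Fin n) :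
    dsum v w (Fin.natAdd m i) (Fin.castAdd s j) = 0 := by simp [dsum]

@[simp] theorem dsum_natAdd_natAdd (i : Fin r) (j : Fin s) :
    dsum v w (Fin.natAdd m i) (Fin.natAdd n j) = w i j := by simp [dsum]

theorem dsum_add_dsum (v' : Matrix (Fin m) (Fin n) V) (w' : Matrix (Fin r) (Fin s) V) :
    dsum v w + dsum v' w' = dsum (v + v') (w + w') := by
  ext i j
  induction i using Fin.addCases <;> induction j using Fin.addCases <;> simp

theorem dsum_sub_dsum (v' : Matrix (Fin m) (Fin n) V) (w' : Matrix (Fin r) (Fin s) V) :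
    dsum v w - dsum v' w' = dsum (v - v') (w - w') := by
  ext i j
  induction i using Fin.addCases <;> induction j using Fin.addCases <;> simp

theorem smul_dsum [Module ℂ V] (c : ℂ) : c • dsum v w = dsum (c • v) (c • w) := by
  ext i j
  induction i using Fin.addCases <;> induction j using Fin.addCases <;> simp

theorem conjTranspose_dsum [StarAddMonoid V] : (dsum v w)ᴴ = dsum vᴴ wᴴ := by
  ext i j
  induction i using Fin.addCases <;> induction j using Fin.addCases <;> simp

theorem dsum_right_injective {v' : Matrix (Fin m) (Fin n) V} {w' : Matrix (Fin r) (Fin s) V}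
    (h : dsum v w = dsum v' w') : w = w' := by
  ext i j
  simpa using congr_fun₂ h (Fin.natAdd m i) (Fin.natAdd n j)

end

theorem dsum_of_fin_zero {c d : ℕ} (u : Matrix (Fin c) (Fin d) V) (w : Matrix (Fin 0) (Fin 0) V) :
    dsum u w = u := by
  ext i j
  simpa using dsum_castAdd_castAdd u w i j

theorem diagE_add (e : V) (m n : ℕ) : diagE e (m + n) = dsum (diagE e m) (diagE e n) := by
  ext i j
  induction i using Fin.addCases <;> induction j using Fin.addCases <;>
    simp [diagE, Fin.ext_iff] <;> omega

theorem reindex_finAddFlip_dsum {a b : ℕ} (u : Matrix (Fin a) (Fin a) V)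
    (v : Matrix (Fin b) (Fin b) V) : reindex finAddFlip finAddFlip (dsum u v) = dsum v u := by
  ext i j
  induction i using Fin.addCases <;> induction j using Fin.addCases <;> simp [finAddFlip]

theorem reindex_dsum_assoc {a b c : ℕ} (x : Matrix (Fin a) (Fin a) V)
    (y : Matrix (Fin b) (Fin b) V) (w : Matrix (Fin c) (Fin c) V) :
    reindex (finCongr (add_assoc a b c)) (finCongr (add_assoc a b c)) (dsum (dsum x y) w)
      = dsum x (dsum y w) := by
  ext i j
  simp only [reindex_apply, submatrix_apply, dsum, finCongr_symm, finCongr_apply, Fin.val_cast,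
    Nat.sub_sub]
  split_ifs <;> first | rfl | omega

end DirectSum

/-- The self-adjoint dilation `[[0, z], [zᴴ, 0]]`. -/
def dilation {V : Type*} [AddCommGroup V] [StarAddMonoid V] {a b : ℕ}
    (z : Matrix (Fin a) (Fin b) V) : Matrix (Fin (a + b)) (Fin (a + b)) V :=
  reindex (Equiv.refl _) finAddFlip (dsum z zᴴ)

section Dilation

variable {V : Type*} [AddCommGroup V] [StarAddMonoid V] {a b : ℕ}

theorem isHermitian_dilation (z : Matrix (Fin a) (Fin b) V) : (dilation z).IsHermitian := by
  ext i j
  induction i using Fin.addCases <;> induction j using Fin.addCases <;> simp [dilation, finAddFlip]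

theorem dilation_add (x y : Matrix (Fin a) (Fin b) V) :
    dilation (x + y) = dilation x + dilation y := by
  simp only [dilation, conjTranspose_add, ← dsum_add_dsum]
  rfl

end Dilation

namespace AMOUS

variable {V : Type*} [AddCommGroup V] [Module ℂ V] [StarAddMonoid V] [StarModule ℂ V]
variable (A : AMOUS V)

section Cone

variable {n : ℕ}

theorem zero_mem_pos (n : ℕ) : (0 : Matrix (Fin n) (Fin n) V) ∈ A.pos n := by
  simpa [zero_aSmul] using A.pos_conj n n 0 _ (A.abs_mem n n 0)

theorem conjTranspose_eq_of_mem_pos {u : Matrix (Fin n) (Fin n) V} (hu : u ∈ A.pos n) : uᴴ = u :=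
  A.pos_star n u hu

theorem ofReal_smul_mem_pos {k : ℝ} (hk : 0 ≤ k) {v : Matrix (Fin n) (Fin n) V}
    (hv : v ∈ A.pos n) : (k : ℂ) • v ∈ A.pos n := by
  have h := A.pos_conj n n ((Real.sqrt k : ℂ) • 1) v hv
  rwa [conjTranspose_smul, conjTranspose_one, smulB_smul_right, smulB_one, smul_aSmul,
    aSmul_smul, aSmul_one, smul_smul, Complex.star_def, Complex.conj_ofReal,
    ← Complex.ofReal_mul, Real.mul_self_sqrt hk] at h

/-- Compressing by all columns `c` reduces properness of `Mₙ(V)⁺` to that of `V⁺`; the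
compressions `∑ c̄ₖ cₜ vₖₜ` then determine `v` by polarization. -/
theorem eq_zero_of_mem_pos_of_neg_mem_pos {v : Matrix (Fin n) (Fin n) V} (hv : v ∈ A.pos n)
    (hv' : -v ∈ A.pos n) : v = 0 := by
  have hcol : ∀ c : Fin n → ℂ, ∑ k, ∑ t, (star (c k) * c t) • v k t = 0 := by
    intro c
    let a : Matrix (Fin n) (Fin 1) ℂ := of fun k _ => c k
    have hneg := A.pos_conj 1 n a (-v) hv'
    rw [← neg_one_smul ℂ v, smulB_smul, aSmul_smul, neg_one_smul] at hneg
    have h := A.proper _ (A.pos_conj 1 n a v hv) hneg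
    simpa [a, aSmul, smulB, Finset.smul_sum, smul_smul] using congr_fun₂ h 0 0
  have hdiag : ∀ i, v i i = 0 := fun i => by simpa [Pi.single_apply] using hcol (Pi.single i 1)
  have hoff : ∀ i j, i ≠ j → ∀ z : ℂ, star z • v j i + z • v i j = 0 := by
    intro i j hij z
    simpa [add_mul, mul_add, add_smul, Finset.sum_add_distrib, ite_mul, mul_ite, apply_ite star,
      ite_smul, hdiag, hij, Ne.symm hij]
      using hcol (fun k => (if k = i then 1 else 0) + if k = j then z else 0)
  ext i j
  by_cases hij : i = j
  · subst hij
    exact hdiag i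
  · have h1 := hoff i j hij 1
    have h2 := hoff i j hij Complex.I
    simp only [star_one, one_smul, Complex.star_def, Complex.conj_I, neg_smul] at h1 h2
    have h3 : (2 * Complex.I) • v i j =
        Complex.I • (v j i + v i j) + (-(Complex.I • v j i) + Complex.I • v i j) := by module
    rw [h1, h2, smul_zero, add_zero] at h3
    exact (smul_eq_zero.mp h3).resolve_left (by simp)

theorem eq_of_sub_mem_pos {x y : Matrix (Fin n) (Fin n) V} (h : x - y ∈ A.pos n)
    (h' : y - x ∈ A.pos n) : x = y :=
  sub_eq_zero.1 (A.eq_zero_of_mem_pos_of_neg_mem_pos h (by rwa [neg_sub]))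

theorem sub_mem_pos_of_smul_sub_mem_pos {x y : Matrix (Fin n) (Fin n) V} (hy : y ∈ A.pos n)
    {c : ℝ} (hc : c ≤ 1) (h : (c : ℂ) • y - x ∈ A.pos n) : y - x ∈ A.pos n := by
  have := A.pos_add n _ h _ (A.ofReal_smul_mem_pos (sub_nonneg.2 hc) hy)
  convert this using 1
  push_cast
  module

theorem dsum_mem_pos {m r : ℕ} {u : Matrix (Fin m) (Fin m) V} {w : Matrix (Fin r) (Fin r) V}
    (hu : u ∈ A.pos m) (hw : w ∈ A.pos r) : dsum u w ∈ A.pos (m + r) := by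
  simpa [A.abs_dsum, A.abs_of_pos _ _ hu, A.abs_of_pos _ _ hw]
    using A.abs_mem (m + r) (m + r) (dsum u w)

end Cone

section AbsoluteValue

theorem abs_aSmul_of_isometry {r m n : ℕ} {α : Matrix (Fin r) (Fin m) ℂ} (hα : αᴴ * α = 1)
    (z : Matrix (Fin m) (Fin n) V) : A.abs r n (aSmul α z) = A.abs m n z := by
  have hle := A.abs_smul_le r m n n α z 1
  rw [smulB_one, smulB_one, A.abs_of_pos n _ (A.abs_mem m n z)] at hle
  have hge := A.abs_smul_le m r n n αᴴ (aSmul α z) 1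
  rw [smulB_one, smulB_one, A.abs_of_pos n _ (A.abs_mem r n _), aSmul_aSmul, hα,
    aSmul_one] at hge
  have hα' : cnorm αᴴ ≤ 1 := (l2_opNorm_conjTranspose α).trans_le (cnorm_le_one_of_isometry hα)
  exact A.eq_of_sub_mem_pos (A.sub_mem_pos_of_smul_sub_mem_pos (A.abs_mem r n _) hα' hge)
    (A.sub_mem_pos_of_smul_sub_mem_pos (A.abs_mem m n z) (cnorm_le_one_of_isometry hα) hle)

theorem abs_smulB_of_mem_pos {n s : ℕ} {w : Matrix (Fin n) (Fin n) V} (hw : w ∈ A.pos n)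
    {β : Matrix (Fin n) (Fin s) ℂ} (h₁ : βᴴ * β = 1) (h₂ : β * βᴴ = 1) :
    A.abs n s (smulB w β) = aSmul βᴴ (smulB w β) :=
  calc A.abs n s (smulB w β) = A.abs n s (aSmul β (aSmul βᴴ (smulB w β))) := by
        rw [aSmul_aSmul, h₂, aSmul_one]
    _ = A.abs s s (aSmul βᴴ (smulB w β)) := A.abs_aSmul_of_isometry h₁ _
    _ = aSmul βᴴ (smulB w β) := A.abs_of_pos s _ (A.pos_conj s n β w hw)

theorem abs_smulB_of_unitary {m n s : ℕ} (z : Matrix (Fin m) (Fin n) V)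
    {β : Matrix (Fin n) (Fin s) ℂ} (h₁ : βᴴ * β = 1) (h₂ : β * βᴴ = 1) :
    A.abs m s (smulB z β) = aSmul βᴴ (smulB (A.abs m n z) β) := by
  set X := A.abs m s (smulB z β)
  have hX : X ∈ A.pos s := A.abs_mem m s _
  have hle := A.abs_smul_le m m n s 1 z β
  rw [aSmul_one, A.abs_smulB_of_mem_pos (A.abs_mem m n z) h₁ h₂] at hle
  have hge := A.abs_smul_le m m s n 1 (smulB z β) βᴴ
  rw [aSmul_one, smulB_smulB, h₂, smulB_one, A.abs_smulB_of_mem_pos hX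
    (by rwa [conjTranspose_conjTranspose]) (by rwa [conjTranspose_conjTranspose]),
    conjTranspose_conjTranspose] at hge
  have hconj : aSmul βᴴ (smulB (aSmul β (smulB X βᴴ)) β) = X := by
    rw [aSmul_smulB, aSmul_aSmul, h₁, aSmul_one, smulB_smulB, h₁, smulB_one]
  have hge' := A.pos_conj s n β _ hge
  rw [smulB_sub, aSmul_sub, smulB_smul, aSmul_smul, hconj] at hge'
  exact A.eq_of_sub_mem_pos
    (A.sub_mem_pos_of_smul_sub_mem_pos hX (cnorm_le_one_of_isometry (by simp)) hge')
    (A.sub_mem_pos_of_smul_sub_mem_pos (A.pos_conj s n β _ (A.abs_mem m n z))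
      (cnorm_le_one_of_isometry (by simp)) hle)

theorem abs_reindex {a b a' b' : ℕ} (σ : Fin a ≃ Fin a') (τ : Fin b ≃ Fin b')
    (z : Matrix (Fin a) (Fin b) V) :
    A.abs a' b' (reindex σ τ z) = reindex τ τ (A.abs a b z) := by
  rw [reindex_eq_aSmul_smulB, A.abs_aSmul_of_isometry (submatrix_one_isometry σ.symm),
    A.abs_smulB_of_unitary _ (by rw [conjTranspose_conjTranspose]; exact submatrix_one_coisometry _)
      (by rw [conjTranspose_conjTranspose]; exact submatrix_one_isometry _),
    conjTranspose_conjTranspose, ← reindex_eq_aSmul_smulB]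

theorem abs_zero (m n : ℕ) : A.abs m n 0 = 0 := by
  have h := A.abs_smul_le m m n n 0 0 1
  rw [zero_aSmul, show cnorm (0 : Matrix (Fin m) (Fin m) ℂ) = 0 from norm_zero,
    Complex.ofReal_zero, zero_smul, zero_sub] at h
  exact A.eq_zero_of_mem_pos_of_neg_mem_pos (A.abs_mem m n 0) h

theorem abs_dsum_zero_left {c n k : ℕ} (u : Matrix (Fin c) (Fin n) V) :
    A.abs (c + k) n (dsum u (0 : Matrix (Fin k) (Fin 0) V)) = A.abs c n u := by
  have h := A.abs_dsum c n k 0 u 0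
  rwa [dsum_of_fin_zero] at h

theorem abs_dsum_zero_right {c n k : ℕ} (u : Matrix (Fin n) (Fin c) V) :
    A.abs n (c + k) (dsum u (0 : Matrix (Fin 0) (Fin k) V)) = dsum (A.abs n c u) 0 := by
  have h := A.abs_dsum n c 0 k u 0
  rwa [abs_zero] at h

end AbsoluteValue

section OrderProjection

theorem eN_add (m n : ℕ) : A.eN (m + n) = dsum (A.eN m) (A.eN n) := diagE_add A.e m n

theorem eN_mem_pos : ∀ n, A.eN n ∈ A.pos n
  | 0 => by
    convert A.zero_mem_pos 0
    exact Subsingleton.elim _ _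
  | n + 1 => by
    rw [eN_add]
    exact A.dsum_mem_pos (eN_mem_pos n) A.e_pos

theorem conjTranspose_eN (n : ℕ) : (A.eN n)ᴴ = A.eN n :=
  A.conjTranspose_eq_of_mem_pos (A.eN_mem_pos n)

theorem reindex_eN {a a' : ℕ} (σ : Fin a ≃ Fin a') : reindex σ σ (A.eN a) = A.eN a' := by
  ext i j
  simp [eN, diagE]

variable {A}
variable {n : ℕ} {p : Matrix (Fin n) (Fin n) V}

theorem IsOP.conjTranspose_eq (hp : A.IsOP n p) : pᴴ = p := hp.1

theorem IsOP.isHermitian_two_smul_sub (hp : A.IsOP n p) :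
    ((2 : ℂ) • p - A.eN n).IsHermitian := by
  rw [IsHermitian, conjTranspose_sub, conjTranspose_smul, hp.conjTranspose_eq, conjTranspose_eN]
  norm_num

/-- `|2p − eⁿ| + (2p − eⁿ) = 2p` is positive. -/
theorem IsOP.mem_pos (hp : A.IsOP n p) : p ∈ A.pos n := by
  have h := (A.abs_add_self n ((2 : ℂ) • p - A.eN n) hp.isHermitian_two_smul_sub).1
  rw [hp.2] at h
  convert A.ofReal_smul_mem_pos (k := 1 / 2) (by norm_num) h using 1
  push_cast
  module

theorem IsOP.compl (hp : A.IsOP n p) : A.IsOP n (A.eN n - p) := by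
  refine ⟨by rw [mstar_eq_conjTranspose, conjTranspose_sub, hp.conjTranspose_eq,
    conjTranspose_eN], ?_⟩
  have h : (2 : ℂ) • (A.eN n - p) - A.eN n = ((-1 : ℝ) : ℂ) • ((2 : ℂ) • p - A.eN n) := by
    push_cast
    module
  rw [h, A.abs_real_smul n (-1) ((2 : ℂ) • p - A.eN n) hp.isHermitian_two_smul_sub, hp.2]
  norm_num

variable (A) in
theorem isOP_eN (n : ℕ) : A.IsOP n (A.eN n) := by
  refine ⟨A.conjTranspose_eN n, ?_⟩
  rw [show (2 : ℂ) • A.eN n - A.eN n = A.eN n by module, A.abs_of_pos n _ (A.eN_mem_pos n)]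

variable (A) in
theorem isOP_zero (n : ℕ) : A.IsOP n 0 := by
  simpa using (A.isOP_eN n).compl

theorem IsOP.dsum {r : ℕ} {q : Matrix (Fin r) (Fin r) V} (hp : A.IsOP n p) (hq : A.IsOP r q) :
    A.IsOP (n + r) (dsum p q) := by
  refine ⟨by rw [mstar_eq_conjTranspose, conjTranspose_dsum, hp.conjTranspose_eq,
    hq.conjTranspose_eq], ?_⟩
  rw [eN_add, smul_dsum, dsum_sub_dsum, A.abs_dsum, hp.2, hq.2]

theorem IsOP.reindex {a' : ℕ} (hp : A.IsOP n p) (σ : Fin n ≃ Fin a') :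
    A.IsOP a' (reindex σ σ p) := by
  refine ⟨by rw [mstar_eq_conjTranspose, conjTranspose_reindex, hp.conjTranspose_eq], ?_⟩
  have h : (2 : ℂ) • Matrix.reindex σ σ p - A.eN a' =
      Matrix.reindex σ σ ((2 : ℂ) • p - A.eN n) := by
    rw [← A.reindex_eN σ]
    ext
    simp
  rw [h, A.abs_reindex, hp.2, A.reindex_eN]

end OrderProjection

section Orthogonality

variable {A}
variable {n : ℕ} {u v u' v' w : Matrix (Fin n) (Fin n) V}

theorem Perp.symm (hu : u ∈ A.pos n) (hv : v ∈ A.pos n) (h : A.Perp u v) : A.Perp v u := by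
  have hsa : (u - v).IsHermitian := by
    rw [IsHermitian, conjTranspose_sub, A.conjTranspose_eq_of_mem_pos hu,
      A.conjTranspose_eq_of_mem_pos hv]
  rw [Perp, show v - u = ((-1 : ℝ) : ℂ) • (u - v) by push_cast; module,
    A.abs_real_smul n (-1) (u - v) hsa, h, add_comm]
  norm_num

theorem Perp.add_right (hu : u ∈ A.pos n) (hv : v ∈ A.pos n) (hw : w ∈ A.pos n)
    (h₁ : A.Perp u v) (h₂ : A.Perp u w) : A.Perp u (v + w) := by
  have h := (A.ortho_pm n u hu v hv w hw h₁ h₂).1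
  rwa [A.abs_of_pos n _ (A.pos_add n v hv w hw)] at h

theorem Perp.mono (hu : u ∈ A.pos n) (hv : v ∈ A.pos n) (hu' : u' ∈ A.pos n)
    (hv' : v' ∈ A.pos n) (h : A.Perp u v) (hle_u : u - u' ∈ A.pos n) (hle_v : v - v' ∈ A.pos n) :
    A.Perp u' v' := by
  have h₁ : A.Perp v' u := Perp.symm hu hv' (A.absorb n u hu v hv v' hv' h hle_v)
  exact Perp.symm hv' hu' (A.absorb n v' hv' u hu u' hu' h₁ hle_u)

theorem perp_zero (hu : u ∈ A.pos n) : A.Perp u 0 := by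
  rw [Perp, sub_zero, add_zero, A.abs_of_pos n u hu]

theorem Perp.dsum {r : ℕ} {x x' : Matrix (Fin r) (Fin r) V} (h : A.Perp u u') (h' : A.Perp x x') :
    A.Perp (dsum u x) (dsum u' x') := by
  rw [Perp, dsum_sub_dsum, A.abs_dsum, h, h', dsum_add_dsum]

theorem IsOP.perp_compl {p : Matrix (Fin n) (Fin n) V} (hp : A.IsOP n p) :
    A.Perp p (A.eN n - p) := by
  rw [Perp, show p - (A.eN n - p) = (2 : ℂ) • p - A.eN n by module, hp.2]
  abel

variable (A) in
def posPart (y : Matrix (Fin n) (Fin n) V) : Matrix (Fin n) (Fin n) V :=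
  ((1 / 2 : ℝ) : ℂ) • (A.abs n n y + y)

variable (A) in
def negPart (y : Matrix (Fin n) (Fin n) V) : Matrix (Fin n) (Fin n) V :=
  ((1 / 2 : ℝ) : ℂ) • (A.abs n n y - y)

variable (A) in
theorem posPart_mem_pos {y : Matrix (Fin n) (Fin n) V} (hy : y.IsHermitian) :
    A.posPart y ∈ A.pos n :=
  A.ofReal_smul_mem_pos (by norm_num) (A.abs_add_self n y hy).1

variable (A) in
theorem negPart_mem_pos {y : Matrix (Fin n) (Fin n) V} (hy : y.IsHermitian) :
    A.negPart y ∈ A.pos n :=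
  A.ofReal_smul_mem_pos (by norm_num) (A.abs_add_self n y hy).2

theorem perp_posPart_negPart (y : Matrix (Fin n) (Fin n) V) :
    A.Perp (A.posPart y) (A.negPart y) := by
  have hdiff : A.posPart y - A.negPart y = y := by
    rw [posPart, negPart]
    push_cast
    module
  rw [Perp, hdiff, posPart, negPart]
  push_cast
  module

theorem abs_sub_posPart (y : Matrix (Fin n) (Fin n) V) :
    A.abs n n y - A.posPart y = A.negPart y := by
  rw [posPart, negPart]
  push_cast
  module

theorem abs_sub_negPart (y : Matrix (Fin n) (Fin n) V) :
    A.abs n n y - A.negPart y = A.posPart y := by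
  rw [posPart, negPart]
  push_cast
  module

/-- By absorption (`z± ≤ |z|`) the parts `z₊, z'₋` and `z'₊, z₋` are orthogonal, hence so are
`z₊ + z'₊` and `z₋ + z'₋`, whose difference is `z + z'` and whose sum is `|z| + |z'|`. -/
theorem abs_add_of_isHermitian {z z' : Matrix (Fin n) (Fin n) V} (hz : z.IsHermitian)
    (hz' : z'.IsHermitian) (h : A.Perp (A.abs n n z) (A.abs n n z')) :
    A.abs n n (z + z') = A.abs n n z + A.abs n n z' := by
  have haz := A.abs_mem n n z
  have haw := A.abs_mem n n z'
  have hzp := A.posPart_mem_pos hz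
  have hzn := A.negPart_mem_pos hz
  have hwp := A.posPart_mem_pos hz'
  have hwn := A.negPart_mem_pos hz'
  have h₁ : A.Perp (A.posPart z) (A.negPart z') :=
    h.mono haz haw hzp hwn (by rwa [abs_sub_posPart]) (by rwa [abs_sub_negPart])
  have h₂ : A.Perp (A.posPart z') (A.negPart z) :=
    (h.symm haz haw).mono haw haz hwp hzn (by rwa [abs_sub_posPart]) (by rwa [abs_sub_negPart])
  have hN := A.pos_add n _ hzn _ hwn
  have hNz := (Perp.add_right hzp hzn hwn (perp_posPart_negPart z) h₁).symm hzp hN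
  have hNw := (Perp.add_right hwp hzn hwn h₂ (perp_posPart_negPart z')).symm hwp hN
  have hPN := (Perp.add_right hN hzp hwp hNz hNw).symm hN (A.pos_add n _ hzp _ hwp)
  have hdiff : A.posPart z + A.posPart z' - (A.negPart z + A.negPart z') = z + z' := by
    rw [posPart, posPart, negPart, negPart]
    push_cast
    module
  have hsum : A.posPart z + A.posPart z' + (A.negPart z + A.negPart z') =
      A.abs n n z + A.abs n n z' := by
    rw [posPart, posPart, negPart, negPart]
    push_cast
    module
  rwa [Perp, hdiff, hsum] at hPN

variable (A) in
theorem abs_dilation {a b : ℕ} (z : Matrix (Fin a) (Fin b) V) :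
    A.abs (a + b) (a + b) (dilation z) = dsum (A.abs b a zᴴ) (A.abs a b z) := by
  rw [dilation, A.abs_reindex, A.abs_dsum, reindex_finAddFlip_dsum]

theorem abs_add_of_perp {a b : ℕ} {x y : Matrix (Fin a) (Fin b) V}
    (h : A.Perp (A.abs a b x) (A.abs a b y)) (h' : A.Perp (A.abs b a xᴴ) (A.abs b a yᴴ)) :
    A.abs a b (x + y) = A.abs a b x + A.abs a b y := by
  have hdil := abs_add_of_isHermitian (isHermitian_dilation x) (isHermitian_dilation y)
    (by rw [abs_dilation, abs_dilation]; exact h'.dsum h)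
  rw [← dilation_add, abs_dilation, abs_dilation, abs_dilation, dsum_add_dsum] at hdil
  exact dsum_right_injective _ _ hdil

end Orthogonality

section Equivalence

variable {A}

theorem IsPI.conjTranspose {m n : ℕ} {v : Matrix (Fin m) (Fin n) V} (hv : A.IsPI v) :
    A.IsPI vᴴ :=
  ⟨hv.2, by rw [mstar_eq_conjTranspose, conjTranspose_conjTranspose]; exact hv.1⟩

theorem sim_of_abs_eq {x y : OPE V} (hx : A.IsOPE x) (hy : A.IsOPE y)
    (v : Matrix (Fin x.1) (Fin y.1) V) (hvx : A.abs y.1 x.1 vᴴ = x.2)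
    (hvy : A.abs x.1 y.1 v = y.2) : A.Sim x y :=
  ⟨v, ⟨hvy ▸ hy, hvx ▸ hx⟩, hvx.symm, hvy.symm⟩

variable {x y z x' y' : OPE V}

theorem IsOPE.dsum (hx : A.IsOPE x) (hy : A.IsOPE y) : A.IsOPE (x.d y) :=
  IsOP.dsum hx hy

theorem Sim.isOPE_left (h : A.Sim x y) : A.IsOPE x := by
  obtain ⟨v, hv, hx, -⟩ := h
  rw [IsOPE, hx]
  exact hv.2

theorem Sim.isOPE_right (h : A.Sim x y) : A.IsOPE y := by
  obtain ⟨v, hv, -, hy⟩ := h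
  rw [IsOPE, hy]
  exact hv.1

theorem Sim.refl (hx : A.IsOPE x) : A.Sim x x := by
  have habs : A.abs x.1 x.1 x.2 = x.2 := A.abs_of_pos x.1 x.2 hx.mem_pos
  exact sim_of_abs_eq hx hx x.2 (by rw [← mstar_eq_conjTranspose, hx.1, habs]) habs

theorem Sim.symm (h : A.Sim x y) : A.Sim y x := by
  obtain ⟨v, hv, hx, hy⟩ := h
  exact ⟨vᴴ, hv.conjTranspose, by rwa [mstar_eq_conjTranspose, conjTranspose_conjTranspose], hx⟩

theorem Sim.trans (hT : A.CondT) (h₁ : A.Sim x y) (h₂ : A.Sim y z) : A.Sim x z := by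
  obtain ⟨u, hu, hx, hy⟩ := h₁
  obtain ⟨w, hw, hy', hz⟩ := h₂
  obtain ⟨t, ht, htx, htz⟩ := hT x.1 y.1 z.1 u wᴴ hu hw.conjTranspose (hy.symm.trans hy')
  refine ⟨t, ht, hx.trans htx.symm, ?_⟩
  rwa [htz, mstar_eq_conjTranspose, conjTranspose_conjTranspose]

theorem Sim.dsum (h : A.Sim x y) (h' : A.Sim x' y') : A.Sim (x.d x') (y.d y') := by
  have hl := h.isOPE_left.dsum h'.isOPE_left
  have hr := h.isOPE_right.dsum h'.isOPE_right
  obtain ⟨v, -, hx, hy⟩ := h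
  obtain ⟨v', -, hx', hy'⟩ := h'
  refine sim_of_abs_eq hl hr (_root_.dsum v v') ?_ ?_
  · show A.abs (y.1 + y'.1) (x.1 + x'.1) (_root_.dsum v v')ᴴ = _root_.dsum x.2 x'.2
    rw [conjTranspose_dsum, A.abs_dsum, hx, hx']
    rfl
  · show A.abs (x.1 + x'.1) (y.1 + y'.1) (_root_.dsum v v') = _root_.dsum y.2 y'.2
    rw [A.abs_dsum, hy, hy']

theorem Sim.aSim (h : A.Sim x y) : A.ASim x y :=
  ⟨OPE.zero V, A.isOP_zero 1, h.dsum (Sim.refl (A.isOP_zero 1))⟩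

theorem sim_reindex {m a : ℕ} {p : Matrix (Fin m) (Fin m) V} (hp : A.IsOP m p) (σ : Fin m ≃ Fin a) :
    A.Sim ⟨m, p⟩ ⟨a, reindex σ σ p⟩ := by
  have habs : A.abs m m p = p := A.abs_of_pos m p hp.mem_pos
  refine sim_of_abs_eq hp (hp.reindex σ) (reindex (Equiv.refl _) σ p) ?_ ?_
  · rw [conjTranspose_reindex, A.abs_reindex, reindex_refl_refl, hp.conjTranspose_eq, habs]
  · rw [A.abs_reindex, habs]

theorem sim_dsum_zero (hx : A.IsOPE x) (k : ℕ) : A.Sim (x.d ⟨k, 0⟩) x := by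
  have habs : A.abs x.1 x.1 x.2 = x.2 := A.abs_of_pos x.1 x.2 hx.mem_pos
  refine sim_of_abs_eq (hx.dsum (A.isOP_zero k)) hx
    (_root_.dsum x.2 (0 : Matrix (Fin k) (Fin 0) V)) ?_ ?_
  · show A.abs x.1 (x.1 + k) (_root_.dsum x.2 (0 : Matrix (Fin k) (Fin 0) V))ᴴ =
      _root_.dsum x.2 (0 : Matrix (Fin k) (Fin k) V)
    rw [conjTranspose_dsum, conjTranspose_zero, hx.conjTranspose_eq, A.abs_dsum_zero_right, habs]
  · show A.abs (x.1 + k) x.1 (_root_.dsum x.2 (0 : Matrix (Fin k) (Fin 0) V)) = x.2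
    rw [A.abs_dsum_zero_left, habs]

theorem sim_dsum_comm (hx : A.IsOPE x) (hy : A.IsOPE y) : A.Sim (x.d y) (y.d x) := by
  show A.Sim ⟨x.1 + y.1, _root_.dsum x.2 y.2⟩ ⟨y.1 + x.1, _root_.dsum y.2 x.2⟩
  exact reindex_finAddFlip_dsum x.2 y.2 ▸ sim_reindex (IsOP.dsum hx hy) finAddFlip

theorem sim_dsum_assoc (hx : A.IsOPE x) (hy : A.IsOPE y) (hz : A.IsOPE z) :
    A.Sim ((x.d y).d z) (x.d (y.d z)) := by
  show A.Sim ⟨x.1 + y.1 + z.1, _root_.dsum (_root_.dsum x.2 y.2) z.2⟩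
    ⟨x.1 + (y.1 + z.1), _root_.dsum x.2 (_root_.dsum y.2 z.2)⟩
  exact reindex_dsum_assoc x.2 y.2 z.2 ▸
    sim_reindex (IsOP.dsum (IsOP.dsum hx hy) hz) (finCongr (add_assoc x.1 y.1 z.1))

end Equivalence

section KZero

variable {A}

theorem sim_dsum_eN_sub {m : ℕ} {p : Matrix (Fin m) (Fin m) V} (hp : A.IsOP m p) :
    A.Sim ⟨m + m, dsum p (A.eN m - p)⟩ ⟨m, A.eN m⟩ := by
  have hq := hp.compl
  have hp₀ := A.abs_of_pos m p hp.mem_pos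
  have hq₀ := A.abs_of_pos m _ hq.mem_pos
  -- `x + y` is the column `[p; eᵐ − p]`
  let x : Matrix (Fin (m + m)) (Fin m) V := dsum p (0 : Matrix (Fin m) (Fin 0) V)
  let y : Matrix (Fin (m + m)) (Fin m) V :=
    reindex finAddFlip (Equiv.refl _) (dsum (A.eN m - p) (0 : Matrix (Fin m) (Fin 0) V))
  have hx : A.abs (m + m) m x = p := by rw [A.abs_dsum_zero_left, hp₀]
  have hy : A.abs (m + m) m y = A.eN m - p := by
    rw [A.abs_reindex, A.abs_dsum_zero_left, hq₀, reindex_refl_refl]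
  have hxH : A.abs m (m + m) xᴴ = dsum p 0 := by
    rw [conjTranspose_dsum, conjTranspose_zero, hp.conjTranspose_eq, A.abs_dsum_zero_right, hp₀]
  have hyH : A.abs m (m + m) yᴴ = dsum 0 (A.eN m - p) := by
    rw [conjTranspose_reindex, A.abs_reindex, conjTranspose_dsum, conjTranspose_zero,
      hq.conjTranspose_eq, A.abs_dsum_zero_right, hq₀, reindex_finAddFlip_dsum]
  have hperp : A.Perp (A.abs (m + m) m x) (A.abs (m + m) m y) := by
    rw [hx, hy]
    exact hp.perp_compl
  have hperpH : A.Perp (A.abs m (m + m) xᴴ) (A.abs m (m + m) yᴴ) := by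
    rw [hxH, hyH]
    exact (perp_zero hp.mem_pos).dsum ((perp_zero hq.mem_pos).symm hq.mem_pos (A.zero_mem_pos m))
  refine sim_of_abs_eq (hp.dsum hq) (A.isOP_eN m) (x + y) ?_ ?_
  · rw [conjTranspose_add, abs_add_of_perp hperpH (by rwa [conjTranspose_conjTranspose,
      conjTranspose_conjTranspose]), hxH, hyH, dsum_add_dsum, add_zero, zero_add]
  · rw [abs_add_of_perp hperp hperpH, hx, hy, add_sub_cancel]

variable (A) in
def complOPE (x : OPE V) : OPE V := ⟨x.1, A.eN x.1 - x.2⟩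

variable (A) in
theorem isOPE_eOPE (n : ℕ) : A.IsOPE (A.eOPE n) := A.isOP_eN n

variable {x y : OPE V}

theorem IsOPE.compl (hx : A.IsOPE x) : A.IsOPE (A.complOPE x) := IsOP.compl hx

theorem complOPE_complOPE : A.complOPE (A.complOPE x) = x := by
  show (⟨x.1, A.eN x.1 - (A.eN x.1 - x.2)⟩ : OPE V) = x
  rw [sub_sub_cancel]
  rfl

theorem sim_complOPE_dsum (hx : A.IsOPE x) : A.Sim ((A.complOPE x).d x) (A.eOPE x.1) := by
  have h : A.Sim ((A.complOPE x).d (A.complOPE (A.complOPE x))) (A.eOPE x.1) :=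
    sim_dsum_eN_sub hx.compl
  rw [complOPE_complOPE] at h
  exact h

theorem eOPE_d_eOPE (m l : ℕ) : (A.eOPE m).d (A.eOPE l) = A.eOPE (m + l) := by
  show (⟨m + l, dsum (A.eN m) (A.eN l)⟩ : OPE V) = ⟨m + l, A.eN (m + l)⟩
  rw [eN_add]

theorem neg_eOPE_kle (hT : A.CondT) (hx : A.IsOPE x) (hy : A.IsOPE y) :
    A.Kle (OPE.zero V, A.eOPE (x.1 + y.1)) (x, y) := by
  have : Trans A.Sim A.Sim A.Sim := ⟨Sim.trans hT⟩
  have hz : A.IsOPE (OPE.zero V) := A.isOP_zero 1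
  have hxe := hx.dsum (A.isOPE_eOPE x.1)
  have hr := hxe.dsum hy.compl
  refine ⟨_, hr, Sim.aSim ?_⟩
  calc A.Sim (((OPE.zero V).d ((x.d (A.eOPE x.1)).d (A.complOPE y))).d y)
          (((x.d (A.eOPE x.1)).d (A.complOPE y)).d y) :=
        ((sim_dsum_comm hz hr).trans hT (sim_dsum_zero hr 1)).dsum (Sim.refl hy)
    A.Sim _ ((x.d (A.eOPE x.1)).d ((A.complOPE y).d y)) := sim_dsum_assoc hxe hy.compl hy
    A.Sim _ ((x.d (A.eOPE x.1)).d (A.eOPE y.1)) := (Sim.refl hxe).dsum (sim_complOPE_dsum hy)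
    A.Sim _ (x.d (A.eOPE (x.1 + y.1))) :=
        eOPE_d_eOPE (A := A) x.1 y.1 ▸ sim_dsum_assoc hx (A.isOPE_eOPE x.1) (A.isOPE_eOPE y.1)
    A.Sim _ (x.d ((A.eOPE (x.1 + y.1)).d (OPE.zero V))) :=
        (Sim.refl hx).dsum (sim_dsum_zero (A.isOPE_eOPE _) 1).symm

theorem kle_eOPE (hT : A.CondT) (hx : A.IsOPE x) (hy : A.IsOPE y) :
    A.Kle (x, y) (A.eOPE (x.1 + y.1), OPE.zero V) := by
  have : Trans A.Sim A.Sim A.Sim := ⟨Sim.trans hT⟩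
  have hey := (A.isOPE_eOPE y.1).dsum hy
  have hr := hx.compl.dsum hey
  refine ⟨_, hr, Sim.aSim ?_⟩
  calc A.Sim ((x.d ((A.complOPE x).d ((A.eOPE y.1).d y))).d (OPE.zero V))
          (x.d ((A.complOPE x).d ((A.eOPE y.1).d y))) := sim_dsum_zero (hx.dsum hr) 1
    A.Sim _ ((x.d (A.complOPE x)).d ((A.eOPE y.1).d y)) := (sim_dsum_assoc hx hx.compl hey).symm
    A.Sim _ ((A.eOPE x.1).d ((A.eOPE y.1).d y)) := (sim_dsum_eN_sub hx).dsum (Sim.refl hey)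
    A.Sim _ ((A.eOPE (x.1 + y.1)).d y) :=
        eOPE_d_eOPE (A := A) x.1 y.1 ▸
          (sim_dsum_assoc (A.isOPE_eOPE x.1) (A.isOPE_eOPE y.1) hy).symm
    A.Sim _ ((A.eOPE (x.1 + y.1)).d (y.d (OPE.zero V))) :=
        (Sim.refl (A.isOPE_eOPE _)).dsum (sim_dsum_zero hy 1).symm

end KZero

end AMOUS

theorem statement16_general {V : Type*} [AddCommGroup V] [Module ℂ V] [StarAddMonoid V] [StarModule ℂ V] (A : AMOUS V) (hT : A.CondT) :
    ∀ x : OPE V × OPE V, A.IsOPPair x → ∃ n : ℕ,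
      A.Kle ((OPE.zero V, A.eOPE n) : OPE V × OPE V) x ∧
        A.Kle x ((A.eOPE n, OPE.zero V) : OPE V × OPE V) := by
  intro x hx
  exact ⟨x.1.1 + x.2.1, AMOUS.neg_eOPE_kle hT hx.1 hx.2, AMOUS.kle_eOPE hT hx.1 hx.2⟩

/-- If every `eⁿ` is finite, `[(e, 0)]` is a distinguished order unit
for `(K₀(V), K₀(V)⁺)`: for every `g ∈ K₀(V)` there is `n` with
`−n[(e,0)] ≤ g ≤ n[(e,0)]`. -/
theorem statement16 {V : Type*} [AddCommGroup V] [Module ℂ V] [StarAddMonoid V] [StarModule ℂ V] (A : AMOUS V) (habs : A.IsAbsolute) (hT : A.CondT)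
    (hfin : ∀ n : ℕ, A.FiniteOP n (A.eN n)) :
    ∀ x : OPE V × OPE V, A.IsOPPair x → ∃ n : ℕ,
      A.Kle ((OPE.zero V, A.eOPE n) : OPE V × OPE V) x ∧
        A.Kle x ((A.eOPE n, OPE.zero V) : OPE V × OPE V) :=
  statement16_general A hT
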